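/- For every ε > 0, the radial truncation map ζ₄^ε : ℝ³ → ℝ³ defined by ζ₄^ε(x) = q^ε(‖x‖)·x/‖x‖ for x ≠ 0 and ζ₄^ε(0) = 0 is Lipschitz continuous with Lipschitz constant 1 with respect to the Euclidean norm. -/

import Mathlib

/-- The truncation profile `q^ε`. -/
noncomputable def qTrunc (ε r : ℝ) : ℝ :=
  if r < 1 / ε then r
  else if r < 2 / ε then -(ε / 2) * (r - 2 / ε) ^ 2 + 3 / (2 * ε)
  else 3 / (2 * ε)

/-- The radial truncation calming function `ζ₄^ε`; note that for `x = 0` the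
formula gives `0` since in Lean division by zero is zero. -/
noncomputable def zeta4 (ε : ℝ) (x : EuclideanSpace ℝ (Fin 3)) : EuclideanSpace ℝ (Fin 3) :=
  (qTrunc ε ‖x‖ / ‖x‖) • x

lemma qTrunc_nonneg (ε r : ℝ) (hε : 0 < ε) (hr : 0 ≤ r) : 0 ≤ qTrunc ε r := by
  have h1 : ε * (1 / ε) = 1 := mul_one_div_cancel hε.ne'
  have h2 : ε * (2 / ε) = 2 := by field_simp
  unfold qTrunc
  split_ifs with ha hb
  · exact hr
  · push_neg at ha
    have ht1 : 1 ≤ ε * r := by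
      have := (div_le_iff₀ hε).mp ha; linarith
    have ht2 : ε * r < 2 := by
      have := (lt_div_iff₀ hε).mp hb; linarith
    have hq : ε * (-(ε/2) * (r - 2/ε) ^ 2 + 3/(2*ε)) = -(1/2) * (ε*r - 2) ^ 2 + 3/2 := by
      field_simp
    have h0 : ε * 0 ≤ ε * (-(ε/2) * (r - 2/ε) ^ 2 + 3/(2*ε)) := by
      rw [mul_zero, hq]; nlinarith
    exact le_of_mul_le_mul_left h0 hε
  · positivity

lemma qTrunc_le (ε r : ℝ) (hε : 0 < ε) (hr : 0 ≤ r) : qTrunc ε r ≤ r := by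
  have h1 : ε * (1 / ε) = 1 := mul_one_div_cancel hε.ne'
  have h2 : ε * (2 / ε) = 2 := by field_simp
  unfold qTrunc
  split_ifs with ha hb
  · exact le_rfl
  · push_neg at ha
    have hid : -(ε/2) * (r - 2/ε) ^ 2 + 3/(2*ε) = r - (ε/2) * (r - 1/ε) ^ 2 := by
      field_simp; ring
    rw [hid]
    nlinarith [sq_nonneg (r - 1/ε)]
  · push_neg at ha hb
    have h3 : 3 / (2*ε) ≤ 2 / ε := by
      rw [div_le_div_iff₀ (by positivity) hε]; nlinarith
    linarith

lemma qTrunc_mono_lip (ε a b : ℝ) (hε : 0 < ε) (ha0 : 0 ≤ a) (hab : a ≤ b) :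
    qTrunc ε a ≤ qTrunc ε b ∧ qTrunc ε b - qTrunc ε a ≤ b - a := by
  have h1 : ε * (1 / ε) = 1 := mul_one_div_cancel hε.ne'
  have h2 : ε * (2 / ε) = 2 := by field_simp
  have hA : 0 < 1/ε := by positivity
  unfold qTrunc
  split_ifs with p1 p2 p3 p4 p5 <;> (try push_neg at *)
  · exact ⟨hab, by linarith⟩
  · -- a < A, A ≤ b < B
    have ht1 : 1 ≤ ε * b := by
      have := (div_le_iff₀ hε).mp p2; linarith
    have ht2 : ε * b < 2 := by
      have := (lt_div_iff₀ hε).mp p3; linarith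
    have hq : ε * (-(ε/2) * (b - 2/ε) ^ 2 + 3/(2*ε)) = -(1/2) * (ε*b - 2) ^ 2 + 3/2 := by
      field_simp
    constructor
    · have h0 : ε * (1/ε) ≤ ε * (-(ε/2) * (b - 2/ε) ^ 2 + 3/(2*ε)) := by
        rw [hq, h1]; nlinarith
      have := le_of_mul_le_mul_left h0 hε
      linarith
    · have h0 : ε * (-(ε/2) * (b - 2/ε) ^ 2 + 3/(2*ε)) ≤ ε * b := by
        rw [hq]; nlinarith [sq_nonneg (ε*b - 1)]
      have := le_of_mul_le_mul_left h0 hε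
      linarith
  · -- a < A, b ≥ B
    have h3 : 3 / (2*ε) ≤ 2 / ε := by
      rw [div_le_div_iff₀ (by positivity) hε]; nlinarith
    have h4 : 1 / ε ≤ 3 / (2*ε) := by
      rw [div_le_div_iff₀ hε (by positivity)]; nlinarith
    constructor <;> linarith
  · linarith
  · -- both middle
    have key : 0 ≤ ε * (b - a) * (2*(2/ε) - a - b) :=
      mul_nonneg (mul_nonneg hε.le (by linarith)) (by linarith)
    have key2 : 0 ≤ ε * (b - a) * (a + b - 2*(1/ε)) :=
      mul_nonneg (mul_nonneg hε.le (by linarith)) (by linarith)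
    constructor <;> nlinarith
  · -- a middle, b ≥ B
    have key : 0 ≤ ε * (a - 1/ε) * (2/ε - a) :=
      mul_nonneg (mul_nonneg hε.le (by linarith)) (by linarith)
    constructor <;> nlinarith [sq_nonneg (a - 2/ε)]
  · linarith
  · linarith
  · exact ⟨le_rfl, by linarith⟩

lemma qTrunc_sq_lip (ε a b : ℝ) (hε : 0 < ε) (ha0 : 0 ≤ a) (hb0 : 0 ≤ b) :
    (qTrunc ε a - qTrunc ε b) ^ 2 ≤ (a - b) ^ 2 := by
  rcases le_total a b with h | h
  · obtain ⟨m, l⟩ := qTrunc_mono_lip ε a b hε ha0 h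
    nlinarith
  · obtain ⟨m, l⟩ := qTrunc_mono_lip ε b a hε hb0 h
    nlinarith

lemma key_scalar (a b qa qb c : ℝ) (ha : 0 < a) (hb : 0 < b)
    (hqa0 : 0 ≤ qa) (hqa : qa ≤ a) (hqb0 : 0 ≤ qb) (hqb : qb ≤ b)
    (hlip : (qa - qb) ^ 2 ≤ (a - b) ^ 2) (hc : c ≤ a * b) :
    qa ^ 2 + qb ^ 2 - 2 * (qa / a * (qb / b * c)) ≤ a ^ 2 + b ^ 2 - 2 * c := by
  have hab : 0 < a * b := mul_pos ha hb
  have hN : 0 ≤ a * b * ((a - b) ^ 2 - (qa - qb) ^ 2) + 2 * (a * b - c) * (a * b - qa * qb) := by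
    have h1 : 0 ≤ a * b * ((a - b) ^ 2 - (qa - qb) ^ 2) :=
      mul_nonneg hab.le (by linarith)
    have h2 : 0 ≤ a * b - qa * qb := by nlinarith [mul_le_mul hqa hqb hqb0 ha.le]
    have h3 : 0 ≤ 2 * (a * b - c) * (a * b - qa * qb) := by
      have := sub_nonneg.2 hc; nlinarith
    linarith
  have hid : qa ^ 2 + qb ^ 2 - 2 * (qa / a * (qb / b * c)) =
      (a ^ 2 + b ^ 2 - 2 * c) -
      (a * b * ((a - b) ^ 2 - (qa - qb) ^ 2) + 2 * (a * b - c) * (a * b - qa * qb)) / (a * b) := by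
    field_simp
    ring
  rw [hid]
  have := div_nonneg hN hab.le
  linarith

theorem zeta4_lipschitz (ε : ℝ) (hε : 0 < ε) (x y : EuclideanSpace ℝ (Fin 3)) :
    ‖zeta4 ε x - zeta4 ε y‖ ≤ ‖x - y‖ := by
  have sq_le : ∀ u v : ℝ, 0 ≤ v → u ^ 2 ≤ v ^ 2 → u ≤ v := by
    intro u v hv h
    nlinarith [sq_nonneg (u - v), sq_nonneg (u + v)]
  rcases eq_or_ne x 0 with rfl | hx
  · simp only [zeta4, norm_zero, smul_zero, zero_sub, norm_neg]
    rw [norm_smul]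
    rcases eq_or_ne y 0 with rfl | hy
    · simp
    · have hy' : 0 < ‖y‖ := norm_pos_iff.2 hy
      have hq0 := qTrunc_nonneg ε ‖y‖ hε hy'.le
      have hq1 := qTrunc_le ε ‖y‖ hε hy'.le
      have h : ‖qTrunc ε ‖y‖ / ‖y‖‖ = qTrunc ε ‖y‖ / ‖y‖ := by
        rw [Real.norm_eq_abs, abs_of_nonneg (div_nonneg hq0 hy'.le)]
      rw [h, div_mul_cancel₀ _ hy'.ne']
      exact hq1
  rcases eq_or_ne y 0 with rfl | hy
  · simp only [zeta4, norm_zero, smul_zero, sub_zero]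
    rw [norm_smul]
    have hx' : 0 < ‖x‖ := norm_pos_iff.2 hx
    have hq0 := qTrunc_nonneg ε ‖x‖ hε hx'.le
    have hq1 := qTrunc_le ε ‖x‖ hε hx'.le
    have h : ‖qTrunc ε ‖x‖ / ‖x‖‖ = qTrunc ε ‖x‖ / ‖x‖ := by
      rw [Real.norm_eq_abs, abs_of_nonneg (div_nonneg hq0 hx'.le)]
    rw [h, div_mul_cancel₀ _ hx'.ne']
    exact hq1
  have hx' : 0 < ‖x‖ := norm_pos_iff.2 hx
  have hy' : 0 < ‖y‖ := norm_pos_iff.2 hy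
  have hqa0 := qTrunc_nonneg ε ‖x‖ hε hx'.le
  have hqa1 := qTrunc_le ε ‖x‖ hε hx'.le
  have hqb0 := qTrunc_nonneg ε ‖y‖ hε hy'.le
  have hqb1 := qTrunc_le ε ‖y‖ hε hy'.le
  have hlip := qTrunc_sq_lip ε ‖x‖ ‖y‖ hε hx'.le hy'.le
  have hc : (inner ℝ x y : ℝ) ≤ ‖x‖ * ‖y‖ := real_inner_le_norm x y
  apply sq_le _ _ (norm_nonneg _)
  have e1 : ‖zeta4 ε x - zeta4 ε y‖ ^ 2 =
      ‖zeta4 ε x‖ ^ 2 - 2 * (inner ℝ (zeta4 ε x) (zeta4 ε y) : ℝ) + ‖zeta4 ε y‖ ^ 2 :=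
    norm_sub_sq_real _ _
  have e2 : ‖x - y‖ ^ 2 = ‖x‖ ^ 2 - 2 * (inner ℝ x y : ℝ) + ‖y‖ ^ 2 := norm_sub_sq_real x y
  have nfx : ‖zeta4 ε x‖ = qTrunc ε ‖x‖ := by
    rw [zeta4, norm_smul, Real.norm_eq_abs, abs_of_nonneg (div_nonneg hqa0 hx'.le),
      div_mul_cancel₀ _ hx'.ne']
  have nfy : ‖zeta4 ε y‖ = qTrunc ε ‖y‖ := by
    rw [zeta4, norm_smul, Real.norm_eq_abs, abs_of_nonneg (div_nonneg hqb0 hy'.le),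
      div_mul_cancel₀ _ hy'.ne']
  have einner : (inner ℝ (zeta4 ε x) (zeta4 ε y) : ℝ) =
      qTrunc ε ‖x‖ / ‖x‖ * (qTrunc ε ‖y‖ / ‖y‖ * (inner ℝ x y : ℝ)) := by
    rw [zeta4, zeta4, real_inner_smul_left, real_inner_smul_right]
  rw [e1, e2, nfx, nfy, einner]
  have := key_scalar ‖x‖ ‖y‖ (qTrunc ε ‖x‖) (qTrunc ε ‖y‖) (inner ℝ x y : ℝ)
    hx' hy' hqa0 hqa1 hqb0 hqb1 hlip hc
  linarith
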